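/- arXiv:1912.06720 — 3 statements merged into one kernel-verified Lean document; each statement's English description precedes it below -/
import Mathlib

section
/- Let d ≥ 2, λ ∈ (0,1), and let C : (0,∞) → (0,∞) be a nondecreasing function. Then for every η₀ > 0 and every r₀ with 0 < r₀ < √λ/2 there exists δ₀ > 0, depending only on d, λ, r₀, η₀ and the function C, with the following property: if u : B_{2/√λ} → ℝ is continuous with sup_{B_{2/√λ}} |u| ≤ 1 and u satisfies the L∞ doubling property with function C, then sup_{B_{r₀}} |u| ≤ δ₀ implies sup_{B_{√λ}} |u| ≤ η₀. -/
open MeasureTheory Real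

/-- Monotonicity of real-valued bounded suprema over nested sets. -/
lemma biSup_mono_of_bound {α : Type*} (f : α → ℝ) (hf : ∀ x, 0 ≤ f x)
    {s t : Set α} (hst : s ⊆ t) {B : ℝ} (hB : ∀ x ∈ t, f x ≤ B) :
    (⨆ x ∈ s, f x) ≤ ⨆ x ∈ t, f x := by
  have hub : BddAbove (Set.range fun x => ⨆ (_ : x ∈ t), f x) := by
    refine ⟨max B 0, ?_⟩
    rintro _ ⟨x, rfl⟩
    dsimp only
    by_cases hx : x ∈ t
    · rw [ciSup_pos hx]; exact le_max_of_le_left (hB x hx)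
    · simp [hx]
  cases isEmpty_or_nonempty α with
  | inl h =>
    have h1 : (⨆ x ∈ s, f x) = 0 := Real.iSup_of_isEmpty _
    have h2 : (⨆ x ∈ t, f x) = 0 := Real.iSup_of_isEmpty _
    rw [h1, h2]
  | inr h =>
    refine ciSup_le fun x => ?_
    by_cases hx : x ∈ s
    · rw [ciSup_pos hx]
      have hle : (⨆ (_ : x ∈ t), f x) ≤ ⨆ y, ⨆ (_ : y ∈ t), f y := le_ciSup hub x
      rwa [ciSup_pos (hst hx)] at hle
    · have hz : (⨆ (_ : x ∈ s), f x) = 0 := by simp [hx]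
      rw [hz]
      exact Real.iSup_nonneg fun y => Real.iSup_nonneg fun _ => hf y

/-- Full propagation of smallness via the Lin–Shen doubling inequality
(Corollary 5 of Kenig–Zhu). -/
theorem full_propagation_of_smallness
    (d : ℕ) (hd : 2 ≤ d) (lam : ℝ) (hlam : lam ∈ Set.Ioo (0:ℝ) 1)
    (C : ℝ → ℝ) (hCpos : ∀ N, 0 < N → 0 < C N)
    (hCmono : ∀ N₁ N₂, 0 < N₁ → N₁ ≤ N₂ → C N₁ ≤ C N₂) :
    ∀ η₀ : ℝ, 0 < η₀ → ∀ r₀ : ℝ, 0 < r₀ → r₀ < Real.sqrt lam / 2 →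
    ∃ δ₀ : ℝ, 0 < δ₀ ∧
      ∀ u : EuclideanSpace ℝ (Fin d) → ℝ,
        ContinuousOn u (Metric.ball 0 (2 / Real.sqrt lam)) →
        (⨆ x ∈ Metric.ball (0 : EuclideanSpace ℝ (Fin d)) (2 / Real.sqrt lam), |u x|) ≤ 1 →
        -- L∞ doubling property with function C
        (∀ N : ℝ, 1 < N →
          (⨆ x ∈ Metric.ball (0 : EuclideanSpace ℝ (Fin d)) (2 / Real.sqrt lam), |u x|) ≤
            N * ⨆ x ∈ Metric.ball (0 : EuclideanSpace ℝ (Fin d)) (Real.sqrt lam), |u x| →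
          ∀ r : ℝ, 0 < r → r < 1 →
            (⨆ x ∈ Metric.ball (0 : EuclideanSpace ℝ (Fin d)) r, |u x|) ≤
              C N * ⨆ x ∈ Metric.ball (0 : EuclideanSpace ℝ (Fin d)) (r / 2), |u x|) →
        (⨆ x ∈ Metric.ball (0 : EuclideanSpace ℝ (Fin d)) r₀, |u x|) ≤ δ₀ →
        (⨆ x ∈ Metric.ball (0 : EuclideanSpace ℝ (Fin d)) (Real.sqrt lam), |u x|) ≤ η₀ := by
  intro η₀ hη r₀ hr₀ hr₀s
  have hs0 : 0 < Real.sqrt lam := Real.sqrt_pos.2 hlam.1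
  have hs1 : Real.sqrt lam < 1 := by
    rw [show (1:ℝ) = Real.sqrt 1 by simp]
    exact Real.sqrt_lt_sqrt hlam.1.le hlam.2
  have hη' : 0 < 1/η₀ := by positivity
  set N : ℝ := 1 + 1/η₀ with hNdef
  have hN1 : 1 < N := by rw [hNdef]; linarith
  have hN0 : 0 < N := lt_trans one_pos hN1
  have hM : 0 < C N := hCpos N hN0
  obtain ⟨k, hk⟩ := exists_pow_lt_of_lt_one (div_pos hr₀ hs0) (by norm_num : (1:ℝ)/2 < 1)
  have hk' : Real.sqrt lam / 2 ^ k < r₀ := by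
    rw [lt_div_iff₀ hs0] at hk
    calc Real.sqrt lam / 2 ^ k = (1/2 : ℝ) ^ k * Real.sqrt lam := by
          rw [div_pow, one_pow]; ring
      _ < r₀ := hk
  refine ⟨η₀ / (C N) ^ k, by positivity, ?_⟩
  intro u _hu hu1 hdoub hsmall
  by_contra hbig
  push_neg at hbig
  -- abbreviation
  let F : ℝ → ℝ := fun r =>
    ⨆ x ∈ Metric.ball (0 : EuclideanSpace ℝ (Fin d)) r, |u x|
  have hbig' : η₀ < F (Real.sqrt lam) := hbig
  have hu1' : F (2 / Real.sqrt lam) ≤ 1 := hu1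
  have hsmall' : F r₀ ≤ η₀ / (C N) ^ k := hsmall
  have hFnn : ∀ r, 0 ≤ F r := fun r =>
    Real.iSup_nonneg fun y => Real.iSup_nonneg fun _ => abs_nonneg _
  -- boundedness of |u| on the ball of radius √lam
  have hbdd : ∃ B : ℝ, ∀ x ∈ Metric.ball (0 : EuclideanSpace ℝ (Fin d)) (Real.sqrt lam),
      |u x| ≤ B := by
    by_cases hBA : BddAbove (Set.range fun x =>
        ⨆ (_ : x ∈ Metric.ball (0 : EuclideanSpace ℝ (Fin d)) (Real.sqrt lam)), |u x|)
    · obtain ⟨B, hB⟩ := hBA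
      refine ⟨B, fun x hx => ?_⟩
      have h := hB (Set.mem_range_self (f := fun x =>
        ⨆ (_ : x ∈ Metric.ball (0 : EuclideanSpace ℝ (Fin d)) (Real.sqrt lam)), |u x|) x)
      rwa [ciSup_pos hx] at h
    · exfalso
      have hz : F (Real.sqrt lam) = 0 := Real.iSup_of_not_bddAbove hBA
      rw [hz] at hbig'
      exact absurd hbig' (not_lt.2 hη.le)
  obtain ⟨B, hB⟩ := hbdd
  -- the doubling hypothesis applies with our N
  have hdb : ∀ r : ℝ, 0 < r → r < 1 → F r ≤ C N * F (r / 2) := by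
    have h1 : (1:ℝ) ≤ N * η₀ := by
      have he : N * η₀ = η₀ + 1 := by rw [hNdef]; field_simp
      linarith
    have hpre : F (2 / Real.sqrt lam) ≤ N * F (Real.sqrt lam) :=
      calc F (2 / Real.sqrt lam) ≤ 1 := hu1'
        _ ≤ N * η₀ := h1
        _ ≤ N * F (Real.sqrt lam) := by nlinarith [hbig']
    exact hdoub N hN1 hpre
  -- iterate the doubling inequality
  have iter : ∀ j : ℕ, F (Real.sqrt lam) ≤ (C N) ^ j * F (Real.sqrt lam / 2 ^ j) := by
    intro j
    induction j with
    | zero => norm_num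
    | succ n ih =>
      have hrpos : 0 < Real.sqrt lam / 2 ^ n := by positivity
      have hrlt : Real.sqrt lam / 2 ^ n < 1 := by
        have h1 : (1:ℝ) ≤ 2 ^ n := one_le_pow₀ (by norm_num)
        have := div_le_self hs0.le h1
        linarith
      have hstep := hdb (Real.sqrt lam / 2 ^ n) hrpos hrlt
      have heq : Real.sqrt lam / 2 ^ n / 2 = Real.sqrt lam / 2 ^ (n+1) := by
        rw [pow_succ]; ring
      rw [heq] at hstep
      calc F (Real.sqrt lam) ≤ (C N) ^ n * F (Real.sqrt lam / 2 ^ n) := ih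
        _ ≤ (C N) ^ n * (C N * F (Real.sqrt lam / 2 ^ (n+1))) := by
            apply mul_le_mul_of_nonneg_left hstep (by positivity)
        _ = (C N) ^ (n+1) * F (Real.sqrt lam / 2 ^ (n+1)) := by ring
  -- monotonicity step: F (√lam / 2^k) ≤ F r₀
  have hmono : F (Real.sqrt lam / 2 ^ k) ≤ F r₀ := by
    apply biSup_mono_of_bound (fun x => |u x|) (fun x => abs_nonneg _)
      (Metric.ball_subset_ball hk'.le)
    intro x hx
    exact hB x (Metric.ball_subset_ball (by linarith) hx)
  have hfinal : F (Real.sqrt lam) ≤ η₀ := by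
    calc F (Real.sqrt lam) ≤ (C N) ^ k * F (Real.sqrt lam / 2 ^ k) := iter k
      _ ≤ (C N) ^ k * F r₀ := mul_le_mul_of_nonneg_left hmono (by positivity)
      _ ≤ (C N) ^ k * (η₀ / (C N) ^ k) := mul_le_mul_of_nonneg_left hsmall' (by positivity)
      _ = η₀ := by field_simp
  exact absurd hbig' (not_lt.2 hfinal)
end

section
/- Let m ≥ 1, let ρ > 0, let f : ℂ → ℂ be complex differentiable on an open set containing the closed disc {|z| ≤ ρ}, and let ũ, u_1, …, u_m be points of the open disc {|z| < ρ} such that u_1, …, u_m are pairwise distinct and ũ ∉ {u_1, …, u_m}. Set Φ_m(t) = Π_{i=1}^m (t − u_i). Then (1/(2πi)) ∮_{|z|=ρ} Φ_m(ũ) f(z) / ((z − ũ) Φ_m(z)) dz = f(ũ) − Σ_{j=1}^m ( Π_{i≠j} (ũ − u_i)/(u_j − u_i) ) f(u_j), where the integral is taken counterclockwise over the circle of radius ρ centered at 0. -/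
open Finset Polynomial Metric

lemma key_scalar (m : ℕ) (hm : 1 ≤ m) (u : Fin m → ℂ) (hinj : Function.Injective u)
    (utilde z : ℂ) (hzt : z ≠ utilde) (hzu : ∀ i, z ≠ u i) :
    (∏ i, (utilde - u i)) / ((z - utilde) * ∏ i, (z - u i)) =
      (z - utilde)⁻¹ -
        ∑ j, (∏ i ∈ Finset.univ.erase j, (utilde - u i) / (u j - u i)) * (z - u j)⁻¹ := by
  classical
  set Φ : Polynomial ℂ := ∏ i, (X - C (u i)) with hΦ
  have hevalΦ : ∀ w, Φ.eval w = ∏ i, (w - u i) := by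
    intro w; simp [hΦ, eval_prod]
  have hP : Φ.eval z ≠ 0 := by
    rw [hevalΦ]
    exact Finset.prod_ne_zero_iff.mpr fun i _ => sub_ne_zero.mpr (hzu i)
  have hm' : (0 : WithBot ℕ) < (m : WithBot ℕ) := by exact_mod_cast hm
  have hΦdeg : Φ.degree = (m : WithBot ℕ) := by
    rw [hΦ, degree_prod]
    simp [degree_X_sub_C]
  set N : Polynomial ℂ := C (Φ.eval z) - Φ with hN
  have hNdeg : N.degree = (m : WithBot ℕ) := by
    rw [hN, degree_sub_eq_right_of_degree_lt, hΦdeg]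
    rw [hΦdeg]
    exact lt_of_le_of_lt degree_C_le hm'
  have hNne : N ≠ 0 := by
    intro h
    rw [h, degree_zero] at hNdeg
    exact absurd hNdeg.symm (by simp)
  have hroot : N.IsRoot z := by simp [hN, IsRoot]
  set Q : Polynomial ℂ := N /ₘ (X - C z) with hQ
  have hfact : (X - C z) * Q = N := mul_divByMonic_eq_iff_isRoot.mpr hroot
  have hQdeg : Q.degree < (m : WithBot ℕ) := by
    rw [← hNdeg]
    exact degree_divByMonic_lt N (X - C z) hNne (by rw [degree_X_sub_C]; norm_num)
  have hinterp : Q = Lagrange.interpolate Finset.univ u fun i => Q.eval (u i) :=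
    Lagrange.eq_interpolate hinj.injOn (by simpa using hQdeg)
  have hQj : ∀ j, Q.eval (u j) = Φ.eval z / (u j - z) := by
    intro j
    have h1 := congrArg (Polynomial.eval (u j)) hfact
    have h2 : Φ.eval (u j) = 0 := by
      rw [hevalΦ]
      exact Finset.prod_eq_zero (Finset.mem_univ j) (by ring)
    simp only [eval_mul, eval_sub, eval_X, eval_C, hN] at h1
    rw [h2, sub_zero] at h1
    rw [eq_div_iff (sub_ne_zero.mpr fun h => hzu j h.symm)]
    linear_combination h1
  have hQt : (utilde - z) * Q.eval utilde = Φ.eval z - Φ.eval utilde := by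
    have h1 := congrArg (Polynomial.eval utilde) hfact
    simp only [eval_mul, eval_sub, eval_X, eval_C, hN] at h1
    rw [← h1]
  have hQt' : Q.eval utilde =
      ∑ j, Q.eval (u j) * ∏ i ∈ Finset.univ.erase j, ((u j - u i)⁻¹ * (utilde - u i)) := by
    conv_lhs => rw [hinterp]
    rw [Lagrange.interpolate_apply, eval_finset_sum]
    refine Finset.sum_congr rfl fun j _ => ?_
    rw [eval_mul, eval_C, Lagrange.basis, eval_prod]
    congr 1
    refine Finset.prod_congr rfl fun i _ => ?_
    simp [Lagrange.basisDivisor]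
  have hcoef : ∀ j : Fin m, (∏ i ∈ Finset.univ.erase j, (utilde - u i) / (u j - u i)) =
      ∏ i ∈ Finset.univ.erase j, ((u j - u i)⁻¹ * (utilde - u i)) :=
    fun j => Finset.prod_congr rfl fun i _ => by rw [div_eq_mul_inv, mul_comm]
  set P := Φ.eval z with hPdef
  set Pt := (∏ i, (utilde - u i)) with hPt
  have hPz : P = ∏ i, (z - u i) := hevalΦ z
  have hPtt : Φ.eval utilde = Pt := hevalΦ utilde
  set S := ∑ j, (∏ i ∈ Finset.univ.erase j, ((u j - u i)⁻¹ * (utilde - u i))) * (z - u j)⁻¹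
    with hS
  have hH : (z - utilde) * P * S = P - Pt := by
    rw [← hPtt, ← hQt, hQt']
    rw [hS, Finset.mul_sum, Finset.mul_sum]
    refine Finset.sum_congr rfl fun j _ => ?_
    rw [hQj j]
    have hne : u j - z ≠ 0 := sub_ne_zero.mpr fun h => hzu j h.symm
    have hne' : z - u j ≠ 0 := sub_ne_zero.mpr (hzu j)
    have hprodne : (∏ i ∈ Finset.univ.erase j, (u j - u i)) ≠ 0 :=
      Finset.prod_ne_zero_iff.mpr fun i hi =>
        sub_ne_zero.mpr fun h => (Finset.mem_erase.mp hi).1 (hinj h.symm)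
    rw [Finset.prod_mul_distrib, Finset.prod_inv_distrib]
    field_simp
    ring
  have hzt' : z - utilde ≠ 0 := sub_ne_zero.mpr hzt
  rw [← hPz]
  have hrw : (∑ j, (∏ i ∈ Finset.univ.erase j, (utilde - u i) / (u j - u i)) * (z - u j)⁻¹)
      = S := Finset.sum_congr rfl fun j _ => by rw [hcoef j]
  rw [hrw]
  have hSval : S = (P - Pt) / ((z - utilde) * P) := by
    rw [eq_div_iff (mul_ne_zero hzt' hP), ← hH]; ring
  rw [hSval]
  field_simp
  ring

lemma circleIntegrable_const_mul' {f : ℂ → ℂ} {c : ℂ} {R : ℝ} (hf : CircleIntegrable f c R)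
    (a : ℂ) : CircleIntegrable (fun z => a * f z) c R :=
  IntervalIntegrable.const_mul hf a

lemma circleIntegrable_finset_sum' {ι : Type*} (s : Finset ι) (F : ι → ℂ → ℂ) {c : ℂ} {R : ℝ}
    (h : ∀ i ∈ s, CircleIntegrable (F i) c R) :
    CircleIntegrable (fun z => ∑ i ∈ s, F i z) c R := by
  have := IntervalIntegrable.sum s (f := fun i (θ : ℝ) => F i (circleMap c R θ))
    (μ := MeasureTheory.volume) (a := 0) (b := 2 * Real.pi) h
  have h2 : (∑ x ∈ s, fun θ => F x (circleMap c R θ))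
      = fun θ => ∑ i ∈ s, F i (circleMap c R θ) := by
    funext θ; simp
  rw [h2] at this
  exact this

lemma circleIntegral_finset_sum' {ι : Type*} (s : Finset ι) (F : ι → ℂ → ℂ) {c : ℂ} {R : ℝ}
    (h : ∀ i ∈ s, CircleIntegrable (F i) c R) :
    (∮ z in C(c, R), ∑ i ∈ s, F i z) = ∑ i ∈ s, ∮ z in C(c, R), F i z := by
  simp only [circleIntegral, Finset.smul_sum]
  exact intervalIntegral.integral_finset_sum fun i hi => (h i hi).out

/-- The interpolation error as a contour integral (residue computation):
(1/2πi) ∮_{|z|=ρ} Φ_m(ũ) f(z)/((z−ũ)Φ_m(z)) dz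
  = f(ũ) − Σ_j (Π_{i≠j} (ũ−u_i)/(u_j−u_i)) f(u_j). -/
theorem interpolation_error_contour_integral
    (m : ℕ) (hm : 1 ≤ m) (ρ : ℝ) (hρ : 0 < ρ) (f : ℂ → ℂ)
    (hf : ∃ U : Set ℂ, IsOpen U ∧ Metric.closedBall 0 ρ ⊆ U ∧ DifferentiableOn ℂ f U)
    (utilde : ℂ) (u : Fin m → ℂ)
    (hu : ∀ i, u i ∈ Metric.ball (0 : ℂ) ρ) (hut : utilde ∈ Metric.ball (0 : ℂ) ρ)
    (hinj : Function.Injective u) (hne : ∀ i, utilde ≠ u i) :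
    (2 * Real.pi * Complex.I)⁻¹ *
        (∮ z in C(0, ρ),
          (∏ i, (utilde - u i)) * f z / ((z - utilde) * ∏ i, (z - u i))) =
      f utilde - ∑ j, (∏ i ∈ Finset.univ.erase j, (utilde - u i) / (u j - u i)) * f (u j) := by
  obtain ⟨U, hUo, hUsub, hfd⟩ := hf
  have hc : ContinuousOn f (Metric.closedBall 0 ρ) := (hfd.mono hUsub).continuousOn
  have hdiff : ∀ z ∈ Metric.ball (0 : ℂ) ρ \ (∅ : Set ℂ), DifferentiableAt ℂ f z := by
    rintro z ⟨hz, -⟩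
    exact (hfd.differentiableAt
      (hUo.mem_nhds (hUsub (Metric.ball_subset_closedBall hz))))
  have cauchy : ∀ w ∈ Metric.ball (0 : ℂ) ρ,
      (∮ z in C(0, ρ), f z / (z - w)) = 2 * Real.pi * Complex.I * f w := fun w hw =>
    Complex.circleIntegral_div_sub_of_differentiable_on_off_countable
      Set.countable_empty hw hc hdiff
  have hzw : ∀ z ∈ Metric.sphere (0 : ℂ) ρ, ∀ w ∈ Metric.ball (0 : ℂ) ρ, z ≠ w := by
    intro z hz w hw h
    rw [mem_sphere_zero_iff_norm] at hz
    rw [mem_ball_zero_iff] at hw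
    rw [h] at hz
    exact hw.ne hz
  have hint : ∀ w ∈ Metric.ball (0 : ℂ) ρ,
      CircleIntegrable (fun z => f z / (z - w)) 0 ρ := by
    intro w hw
    refine ContinuousOn.circleIntegrable hρ.le ?_
    exact (hc.mono sphere_subset_closedBall).div
      ((continuousOn_id.sub continuousOn_const))
      (fun z hz => sub_ne_zero.mpr (hzw z hz w hw))
  set co : Fin m → ℂ := fun j => ∏ i ∈ Finset.univ.erase j, (utilde - u i) / (u j - u i)
    with hco
  have heq : Set.EqOn
      (fun z => (∏ i, (utilde - u i)) * f z / ((z - utilde) * ∏ i, (z - u i)))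
      (fun z => f z / (z - utilde) - ∑ j, co j * (f z / (z - u j)))
      (Metric.sphere (0 : ℂ) ρ) := by
    intro z hz
    have h1 : z ≠ utilde := hzw z hz utilde hut
    have h2 : ∀ i, z ≠ u i := fun i => hzw z hz (u i) (hu i)
    have hk := key_scalar m hm u hinj utilde z h1 h2
    show (∏ i, (utilde - u i)) * f z / ((z - utilde) * ∏ i, (z - u i))
      = f z / (z - utilde) - ∑ j, co j * (f z / (z - u j))
    have e1 : (∏ i, (utilde - u i)) * f z / ((z - utilde) * ∏ i, (z - u i))
        = ((∏ i, (utilde - u i)) / ((z - utilde) * ∏ i, (z - u i))) * f z := by ring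
    rw [e1, hk, sub_mul, Finset.sum_mul]
    congr 1
    · ring
    · exact Finset.sum_congr rfl fun j _ => by rw [hco]; ring
  rw [circleIntegral.integral_congr hρ.le heq]
  have hintj : ∀ j : Fin m, CircleIntegrable (fun z => co j * (f z / (z - u j))) 0 ρ :=
    fun j => circleIntegrable_const_mul' (hint (u j) (hu j)) (co j)
  rw [circleIntegral.integral_sub (hint utilde hut)
    (circleIntegrable_finset_sum' Finset.univ _ fun j _ => hintj j)]
  rw [circleIntegral_finset_sum' Finset.univ _ fun j _ => hintj j]
  rw [cauchy utilde hut]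
  have hterm : ∀ j : Fin m, (∮ z in C(0, ρ), co j * (f z / (z - u j)))
      = co j * (2 * Real.pi * Complex.I * f (u j)) := by
    intro j
    rw [circleIntegral.integral_const_mul, cauchy (u j) (hu j)]
  rw [Finset.sum_congr rfl fun j _ => hterm j]
  have h2pi : (2 * (Real.pi : ℂ) * Complex.I) ≠ 0 := Complex.two_pi_I_ne_zero
  have hfin : (2 * (Real.pi : ℂ) * Complex.I) * f utilde
      - ∑ j, co j * (2 * (Real.pi : ℂ) * Complex.I * f (u j))
      = (2 * (Real.pi : ℂ) * Complex.I) * (f utilde - ∑ j, co j * f (u j)) := by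
    rw [mul_sub, Finset.mul_sum]
    congr 1
    exact Finset.sum_congr rfl fun j _ => by ring
  rw [hfin, inv_mul_cancel_left₀ h2pi]
end

section
/- Let m ≥ 1, let t_i = cos((2i−1)π/(2m)) for i = 1, …, m be the Chebyshev nodes, let s ≥ 1 be a real number, and for j ∈ {1, …, m} define the Lagrange interpolation coefficients c_j = Π_{i≠j} (s − t_i)/(t_j − t_i). Then |c_j| ≤ (2s)^m / m for every j, and consequently Σ_{j=1}^m |c_j| ≤ (2s)^m. -/
open Real

section ChebAuxSection

open Polynomial Finset Real

namespace ChebAux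

lemma deg_coeff : ∀ n : ℕ,
    ((Polynomial.Chebyshev.T ℝ (n:ℤ)).degree ≤ n ∧
     (Polynomial.Chebyshev.T ℝ (n:ℤ)).coeff n = if n = 0 then 1 else 2^(n-1)) := by
  have key : ∀ n : ℕ,
      (((Polynomial.Chebyshev.T ℝ (n:ℤ)).degree ≤ n ∧
        (Polynomial.Chebyshev.T ℝ (n:ℤ)).coeff n = if n = 0 then 1 else 2^(n-1)) ∧
       ((Polynomial.Chebyshev.T ℝ ((n:ℤ)+1)).degree ≤ n+1 ∧
        (Polynomial.Chebyshev.T ℝ ((n:ℤ)+1)).coeff (n+1) = 2^n)) := by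
    intro n
    induction n with
    | zero =>
      refine ⟨⟨?_, ?_⟩, ?_, ?_⟩ <;>
        simp [Polynomial.Chebyshev.T_zero, Polynomial.Chebyshev.T_one, Polynomial.degree_one_le,
          Polynomial.degree_X_le, Polynomial.coeff_X_one]
    | succ n ih =>
      obtain ⟨⟨hd0, hc0⟩, hd1, hc1⟩ := ih
      have hT2 : Polynomial.Chebyshev.T ℝ ((n:ℤ)+1+1)
          = 2 * Polynomial.X * Polynomial.Chebyshev.T ℝ ((n:ℤ)+1)
            - Polynomial.Chebyshev.T ℝ (n:ℤ) := by
        have := Polynomial.Chebyshev.T_add_two (R := ℝ) (n:ℤ)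
        convert this using 2 <;> push_cast <;> ring
      have harg : (((n+1:ℕ)):ℤ)+1 = (n:ℤ)+1+1 := by push_cast; ring
      have hnd1 : (Polynomial.Chebyshev.T ℝ ((n:ℤ)+1)).natDegree ≤ n+1 :=
        Polynomial.natDegree_le_iff_degree_le.mpr (by exact_mod_cast hd1)
      have hnd0 : (Polynomial.Chebyshev.T ℝ (n:ℤ)).natDegree ≤ n :=
        Polynomial.natDegree_le_iff_degree_le.mpr (by exact_mod_cast hd0)
      have hdeg2 : (Polynomial.Chebyshev.T ℝ ((n:ℤ)+1+1)).degree ≤ ((n+2 : ℕ) : WithBot ℕ) := by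
        rw [hT2]
        refine le_trans (Polynomial.degree_sub_le _ _) (max_le ?_ ?_)
        · refine le_trans (Polynomial.degree_mul_le _ _) ?_
          have h2X : (2 * Polynomial.X : ℝ[X]).degree ≤ ((1:ℕ) : WithBot ℕ) := by
            rw [show (2 * Polynomial.X : ℝ[X]) = Polynomial.C 2 * Polynomial.X from by
                rw [map_ofNat], Polynomial.degree_C_mul_X (by norm_num : (2:ℝ) ≠ 0)]
            simp
          have hd1' : (Polynomial.Chebyshev.T ℝ ((n:ℤ)+1)).degree ≤ ((n+1 : ℕ) : WithBot ℕ) := by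
            exact_mod_cast hd1
          refine le_trans (add_le_add h2X hd1') ?_
          rw [← Nat.cast_add]
          exact_mod_cast (by omega : 1+(n+1) ≤ n+2)
        · refine le_trans hd0 ?_
          exact_mod_cast (by omega : n ≤ n+2)
      constructor
      · refine ⟨?_, ?_⟩
        · push_cast
          exact hd1
        · push_cast [hc1]
          simp
      · constructor
        · rw [show (((n+1:ℕ)):ℤ) = (n:ℤ)+1 by push_cast; ring]
          exact_mod_cast hdeg2
        · rw [harg, hT2]
          have hzero : (Polynomial.Chebyshev.T ℝ (n:ℤ)).coeff (n+1+1) = 0 :=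
            Polynomial.coeff_eq_zero_of_natDegree_lt (by omega)
          have h2X : (2 * Polynomial.X * Polynomial.Chebyshev.T ℝ ((n:ℤ)+1)).coeff (n+1+1)
              = 2 * (Polynomial.Chebyshev.T ℝ ((n:ℤ)+1)).coeff (n+1) := by
            rw [mul_assoc, show ((2:ℝ[X])) = Polynomial.C 2 from (map_ofNat Polynomial.C 2).symm,
              Polynomial.coeff_C_mul, Polynomial.coeff_X_mul]
          rw [Polynomial.coeff_sub, hzero, h2X, hc1]
          ring
  intro n; exact (key n).1


noncomputable def node (m i : ℕ) : ℝ :=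
  Real.cos ((2 * (i + 1 : ℕ) - 1) * Real.pi / (2 * m))

noncomputable def theta (m i : ℕ) : ℝ := (2 * (i + 1 : ℕ) - 1) * Real.pi / (2 * m)

lemma node_eq (m i : ℕ) : node m i = Real.cos (theta m i) := rfl

lemma theta_eq (m i : ℕ) : theta m i = (2*(i:ℝ)+1) * Real.pi / (2*m) := by
  unfold theta; push_cast; ring

variable {m i j : ℕ}

lemma theta_pos (hm : 1 ≤ m) (i : ℕ) : 0 < theta m i := by
  rw [theta_eq]
  have : (0:ℝ) < m := by exact_mod_cast hm
  positivity

lemma theta_lt_pi (hm : 1 ≤ m) (hi : i < m) : theta m i < π := by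
  rw [theta_eq]
  rw [div_lt_iff₀ (by positivity : (0:ℝ) < 2*m)]
  have h1 : (2*(i:ℝ)+1) < 2*m := by
    have : (i:ℝ) + 1 ≤ m := by exact_mod_cast hi
    linarith
  have hπ := Real.pi_pos
  nlinarith [mul_lt_mul_of_pos_right h1 hπ]

lemma mul_theta (hm : 1 ≤ m) (i : ℕ) : (m:ℝ) * theta m i = i*π + π/2 := by
  rw [theta_eq]
  have : (m:ℝ) ≠ 0 := by positivity
  field_simp

lemma sin_theta_pos (hm : 1 ≤ m) (hi : i < m) : 0 < Real.sin (theta m i) :=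
  Real.sin_pos_of_pos_of_lt_pi (theta_pos hm i) (theta_lt_pi hm hi)

lemma node_lt_one (hm : 1 ≤ m) (hi : i < m) : node m i < 1 := by
  rw [node_eq, show (1:ℝ) = Real.cos 0 from Real.cos_zero.symm]
  exact Real.strictAntiOn_cos ⟨le_refl _, Real.pi_pos.le⟩
    ⟨(theta_pos hm i).le, (theta_lt_pi hm hi).le⟩ (theta_pos hm i)

lemma neg_one_lt_node (hm : 1 ≤ m) (hi : i < m) : -1 < node m i := by
  rw [node_eq, show (-1:ℝ) = Real.cos π from (Real.cos_pi).symm]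
  exact Real.strictAntiOn_cos ⟨(theta_pos hm i).le, (theta_lt_pi hm hi).le⟩
    ⟨Real.pi_pos.le, le_refl _⟩ (theta_lt_pi hm hi)

lemma node_strictAnti (hm : 1 ≤ m) (hij : i < j) (hj : j < m) : node m j < node m i := by
  rw [node_eq, node_eq]
  have hi : i < m := hij.trans hj
  refine Real.strictAntiOn_cos ⟨(theta_pos hm i).le, (theta_lt_pi hm hi).le⟩
    ⟨(theta_pos hm j).le, (theta_lt_pi hm hj).le⟩ ?_
  rw [theta_eq, theta_eq]
  have hij' : (i:ℝ) < j := by exact_mod_cast hij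
  have h2m : (0:ℝ) < 2*m := by positivity
  rw [div_lt_div_iff₀ h2m h2m]
  have hπ := Real.pi_pos
  nlinarith [mul_pos h2m hπ, mul_lt_mul_of_pos_right (mul_lt_mul_of_pos_right (by linarith : 2*(i:ℝ)+1 < 2*(j:ℝ)+1) hπ) h2m]

lemma node_inj (hm : 1 ≤ m) (hi : i < m) (hj : j < m) (hij : i ≠ j) :
    node m i ≠ node m j := by
  rcases Nat.lt_or_ge i j with h | h
  · exact (node_strictAnti hm h hj).ne'
  · have hji : j < i := by omega
    exact (node_strictAnti hm hji hi).ne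

lemma node_symm (hm : 1 ≤ m) (hi : i < m) : node m (m-1-i) = -(node m i) := by
  rw [node_eq, node_eq, show theta m (m-1-i) = π - theta m i from ?_, Real.cos_pi_sub]
  rw [theta_eq, theta_eq]
  have h1 : ((m-1-i : ℕ):ℝ) = (m:ℝ) - 1 - i := by
    have : i ≤ m - 1 := by omega
    push_cast [Nat.cast_sub (by omega : 1 ≤ m), Nat.cast_sub this]
    push_cast [Nat.cast_sub (by omega : 1 ≤ m)]
    ring
  rw [h1]
  have hm0 : (m:ℝ) ≠ 0 := by positivity
  field_simp
  ring


lemma T_eq (hm : 1 ≤ m) :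
    Polynomial.Chebyshev.T ℝ (m:ℤ)
      = Lagrange.nodal (range m) (node m) * Polynomial.C ((2:ℝ)^(m-1)) := by
  have hcoeff : (Polynomial.Chebyshev.T ℝ (m:ℤ)).coeff m = 2^(m-1) := by
    rw [(deg_coeff m).2, if_neg (by omega)]
  have hdvd : Lagrange.nodal (range m) (node m) ∣ Polynomial.Chebyshev.T ℝ (m:ℤ) := by
    rw [Lagrange.nodal]
    refine Finset.prod_dvd_of_coprime ?_ ?_
    · intro a ha b hb hab
      exact Polynomial.isCoprime_X_sub_C_of_isUnit_sub
        (IsUnit.mk0 _ (sub_ne_zero_of_ne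
          (node_inj hm (mem_range.mp ha) (mem_range.mp hb) hab)))
    · intro i hi
      rw [Polynomial.dvd_iff_isRoot, Polynomial.IsRoot, node_eq,
        Polynomial.Chebyshev.T_real_cos]
      push_cast
      rw [mul_theta hm, Real.cos_add_pi_div_two]
      simp [Real.sin_nat_mul_pi]
  obtain ⟨Q, hQ⟩ := hdvd
  have hTne : Polynomial.Chebyshev.T ℝ (m:ℤ) ≠ 0 := by
    intro h
    rw [h, Polynomial.coeff_zero] at hcoeff
    exact (pow_ne_zero (m-1) (by norm_num : (2:ℝ) ≠ 0)) hcoeff.symm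
  have hQne : Q ≠ 0 := by
    intro h; rw [h, mul_zero] at hQ; exact hTne hQ
  have hnodne : Lagrange.nodal (range m) (node m) ≠ 0 := Lagrange.nodal_ne_zero
  have hndnod : (Lagrange.nodal (range m) (node m)).natDegree = m := by
    rw [Lagrange.natDegree_nodal, card_range]
  have hndT : (Polynomial.Chebyshev.T ℝ (m:ℤ)).natDegree ≤ m :=
    Polynomial.natDegree_le_iff_degree_le.mpr (deg_coeff m).1
  have hndQ : Q.natDegree = 0 := by
    have := Polynomial.natDegree_mul hnodne hQne
    rw [← hQ, hndnod] at this
    omega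
  obtain ⟨c, hc⟩ := Polynomial.natDegree_eq_zero.mp hndQ
  rw [← hc] at hQ
  have hcval : c = 2^(m-1) := by
    have hlc : (Lagrange.nodal (range m) (node m)).coeff m = 1 := by
      have h := (Lagrange.nodal_monic (s := range m) (v := node m)).coeff_natDegree
      rwa [hndnod] at h
    have := hcoeff
    rw [hQ, Polynomial.coeff_mul_C, hlc, one_mul] at this
    exact this
  rw [hQ, hcval]

lemma deriv_abs (hm : 1 ≤ m) (hj : j < m) :
    (2:ℝ)^(m-1) * (Real.sin (theta m j)
      * |∏ i ∈ (range m).erase j, (node m j - node m i)|) = m := by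
  set D : ℝ := ∏ i ∈ (range m).erase j, (node m j - node m i) with hD
  set u : ℝ := Polynomial.eval (node m j) (Polynomial.Chebyshev.U ℝ ((m:ℤ)-1)) with hu
  have h1 : Polynomial.eval (node m j)
      (Polynomial.derivative (Polynomial.Chebyshev.T ℝ (m:ℤ))) = D * (2:ℝ)^(m-1) := by
    rw [T_eq hm, Polynomial.derivative_mul, Polynomial.derivative_C, mul_zero, add_zero,
      Polynomial.eval_mul, Polynomial.eval_C,
      Lagrange.eval_nodal_derivative_eval_node_eq (mem_range.mpr hj), Lagrange.eval_nodal]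
  have h2 : Polynomial.eval (node m j)
      (Polynomial.derivative (Polynomial.Chebyshev.T ℝ (m:ℤ))) = (m:ℝ) * u := by
    rw [Polynomial.Chebyshev.T_derivative_eq_U]
    simp [hu]
  have h3 : u * Real.sin (theta m j) = Real.sin ((m:ℝ) * theta m j) := by
    have := Polynomial.Chebyshev.U_real_cos (theta m j) ((m:ℤ)-1)
    rw [← node_eq] at this
    rw [hu, this]
    norm_num
  have h4 : |Real.sin ((m:ℝ) * theta m j)| = 1 := by
    rw [mul_theta hm, Real.sin_add_pi_div_two]
    have : ((j:ℝ)) * π = ((j:ℤ):ℝ) * π := by norm_num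
    rw [this, Real.abs_cos_int_mul_pi]
  have habs : (m:ℝ) * |u| = |D| * (2:ℝ)^(m-1) := by
    have := congrArg abs (h2.symm.trans h1)
    rwa [abs_mul, abs_mul, abs_pow, abs_two, Nat.abs_cast] at this
  have hsin : |u| * Real.sin (theta m j) = 1 := by
    have := congrArg abs h3
    rwa [abs_mul, abs_of_pos (sin_theta_pos hm hj), h4] at this
  calc (2:ℝ)^(m-1) * (Real.sin (theta m j) * |D|)
      = ((m:ℝ) * |u|) * Real.sin (theta m j) := by rw [habs]; ring
    _ = (m:ℝ) * (|u| * Real.sin (theta m j)) := by ring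
    _ = m := by rw [hsin, mul_one]

lemma prod_plus (hm : 1 ≤ m) (hj : j < m) (s : ℝ) :
    ∏ i ∈ (range m).erase j, (s + node m i)
      = ∏ i ∈ (range m).erase (m-1-j), (s - node m i) := by
  refine Finset.prod_nbij' (fun i => m-1-i) (fun i => m-1-i) ?_ ?_ ?_ ?_ ?_
  · intro a ha
    simp only [mem_erase, mem_range] at ha ⊢
    omega
  · intro a ha
    simp only [mem_erase, mem_range] at ha ⊢
    omega
  · intro a ha
    simp only [mem_erase, mem_range] at ha
    omega
  · intro a ha
    simp only [mem_erase, mem_range] at ha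
    omega
  · intro a ha
    simp only [mem_erase, mem_range] at ha
    rw [node_symm hm ha.2]
    ring

lemma num_bound (hm : 1 ≤ m) (hj : j < m) {s : ℝ} (hs : 1 ≤ s) :
    Real.sin (theta m j) * ∏ i ∈ (range m).erase j, (s - node m i) ≤ 2 * s^m := by
  have hnode : ∀ i, i < m → -1 < node m i ∧ node m i < 1 :=
    fun i hi => ⟨neg_one_lt_node hm hi, node_lt_one hm hi⟩
  have hfac : ∀ i ∈ (range m).erase j, 0 < s - node m i := by
    intro i hi
    have h := hnode i (mem_range.mp (mem_of_mem_erase hi))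
    linarith
  have hfac' : ∀ i ∈ (range m).erase j, 0 < s + node m i := by
    intro i hi
    have h := hnode i (mem_range.mp (mem_of_mem_erase hi))
    linarith
  set j' : ℕ := m-1-j with hj'def
  have hj' : j' < m := by omega
  set B : ℝ := ∏ i ∈ (range m).erase j, (s - node m i) with hB
  set B' : ℝ := ∏ i ∈ (range m).erase j', (s - node m i) with hB'
  have hBpos : 0 < B := Finset.prod_pos hfac
  have hB'eq : B' = ∏ i ∈ (range m).erase j, (s + node m i) := (prod_plus hm hj s).symm
  have hB'pos : 0 < B' := by
    rw [hB'eq]; exact Finset.prod_pos hfac'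
  have hBB' : B * B' ≤ (s^2)^(m-1) := by
    rw [hB'eq, hB, ← Finset.prod_mul_distrib]
    have hcard : ((range m).erase j).card = m - 1 := by
      rw [card_erase_of_mem (mem_range.mpr hj), card_range]
    calc ∏ i ∈ (range m).erase j, (s - node m i) * (s + node m i)
        ≤ ∏ i ∈ (range m).erase j, s^2 := by
          refine Finset.prod_le_prod ?_ ?_
          · intro i hi
            exact le_of_lt (mul_pos (hfac i hi) (hfac' i hi))
          · intro i hi
            have h := hnode i (mem_range.mp (mem_of_mem_erase hi))
            nlinarith [sq_nonneg (node m i)]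
      _ = (s^2)^(m-1) := by rw [Finset.prod_const, hcard]
  set u : ℝ := s - node m j with huu
  set v : ℝ := s + node m j with hvv
  have hnj := hnode j hj
  have hu : 0 < u := by simp only [huu]; linarith [hnj.2]
  have hv0 : 0 < v := by simp only [hvv]; linarith [hnj.1]
  have hv : v ≤ 2*s := by simp only [hvv]; linarith [hnj.2]
  have hBu : B * u = B' * v := by
    have e1 : u * B = ∏ i ∈ range m, (s - node m i) :=
      Finset.mul_prod_erase (range m) (fun i => s - node m i) (mem_range.mpr hj)
    have e2 : (s - node m j') * B' = ∏ i ∈ range m, (s - node m i) :=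
      Finset.mul_prod_erase (range m) (fun i => s - node m i) (mem_range.mpr hj')
    have e3 : s - node m j' = v := by
      rw [hj'def, node_symm hm hj]; simp [hvv]
    rw [e3] at e2
    rw [mul_comm] at e1
    rw [e1, ← e2]
    ring
  set A : ℝ := Real.sin (theta m j) with hA
  have hApos : 0 < A := sin_theta_pos hm hj
  have hA2 : A^2 ≤ u * v := by
    have hsin2 : A^2 = (1 - node m j) * (1 + node m j) := by
      have := Real.sin_sq_add_cos_sq (theta m j)
      rw [← node_eq] at this
      nlinarith [this]
    rw [hsin2]
    have h1 : (0:ℝ) < 1 - node m j := by linarith [hnj.2]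
    have h2 : (0:ℝ) < 1 + node m j := by linarith [hnj.1]
    have h3 : 1 - node m j ≤ u := by simp only [huu]; linarith
    have h4 : 1 + node m j ≤ v := by simp only [hvv]; linarith
    nlinarith
  have hs2m : (s^2)^(m-1) * s^2 = s^(2*m) := by
    rw [← pow_mul, ← pow_add]
    congr 1
    omega
  have hspos : (0:ℝ) < s := by linarith
  have hsq : (A*B)^2 ≤ (2*s^m)^2 := by
    have key : (A*B)^2 * u ≤ (2*s^m)^2 * u := by
      have c1 : (A*B)^2 * u = A^2 * B * (B * u) := by ring
      rw [c1, hBu]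
      have c2 : A^2 * B * (B' * v) = (A^2) * (B * B') * v := by ring
      rw [c2]
      have hBBpos : 0 < B * B' := mul_pos hBpos hB'pos
      calc A^2 * (B * B') * v ≤ (u*v) * (B * B') * v :=
            mul_le_mul_of_nonneg_right (mul_le_mul_of_nonneg_right hA2 hBBpos.le) hv0.le
        _ = (B * B') * (v^2) * u := by ring
        _ ≤ (s^2)^(m-1) * ((2*s)^2) * u := by
            have hvsq : v^2 ≤ (2*s)^2 := by nlinarith
            have h1 : (B * B') * (v^2) ≤ (s^2)^(m-1) * ((2*s)^2) := by
              refine mul_le_mul hBB' hvsq (by positivity) (by positivity)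
            exact mul_le_mul_of_nonneg_right h1 hu.le
        _ = (2*s^m)^2 * u := by
            rw [show ((2*s)^2 : ℝ) = 4 * s^2 by ring]
            rw [show ((s^2:ℝ))^(m-1) * (4 * s^2) = 4 * ((s^2)^(m-1) * s^2) by ring, hs2m]
            rw [show ((2*s^m:ℝ))^2 = 4 * s^(2*m) by rw [mul_pow, ← pow_mul]; ring]
    exact le_of_mul_le_mul_right key hu
  nlinarith [mul_pos hApos hBpos, hsq, pow_pos hspos m]

end ChebAux

end ChebAuxSection

/-- Bounds on the Lagrange interpolation coefficients at the Chebyshev nodes: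
with t_i = cos((2i−1)π/(2m)) and c_j = Π_{i≠j} (s − t_i)/(t_j − t_i) for s ≥ 1,
one has |c_j| ≤ (2s)^m / m and Σ_j |c_j| ≤ (2s)^m. -/
theorem chebyshev_lagrange_coefficient_bounds
    (m : ℕ) (hm : 1 ≤ m) (s : ℝ) (hs : 1 ≤ s) :
    (∀ j ∈ Finset.range m,
      |∏ i ∈ (Finset.range m).erase j,
          ((s - Real.cos ((2 * (i + 1 : ℕ) - 1) * Real.pi / (2 * m))) /
            (Real.cos ((2 * (j + 1 : ℕ) - 1) * Real.pi / (2 * m)) -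
             Real.cos ((2 * (i + 1 : ℕ) - 1) * Real.pi / (2 * m))))| ≤
        (2 * s) ^ m / m) ∧
    (∑ j ∈ Finset.range m,
      |∏ i ∈ (Finset.range m).erase j,
          ((s - Real.cos ((2 * (i + 1 : ℕ) - 1) * Real.pi / (2 * m))) /
            (Real.cos ((2 * (j + 1 : ℕ) - 1) * Real.pi / (2 * m)) -
             Real.cos ((2 * (i + 1 : ℕ) - 1) * Real.pi / (2 * m))))|) ≤
      (2 * s) ^ m := by
  have hm0 : (0:ℝ) < m := by exact_mod_cast hm
  have key : ∀ j ∈ Finset.range m,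
      |∏ i ∈ (Finset.range m).erase j,
          ((s - Real.cos ((2 * (i + 1 : ℕ) - 1) * Real.pi / (2 * m))) /
            (Real.cos ((2 * (j + 1 : ℕ) - 1) * Real.pi / (2 * m)) -
             Real.cos ((2 * (i + 1 : ℕ) - 1) * Real.pi / (2 * m))))| ≤
        (2 * s) ^ m / m := by
    intro j hjmem
    have hj : j < m := Finset.mem_range.mp hjmem
    have hrw : (∏ i ∈ (Finset.range m).erase j,
          ((s - Real.cos ((2 * (i + 1 : ℕ) - 1) * Real.pi / (2 * m))) /
            (Real.cos ((2 * (j + 1 : ℕ) - 1) * Real.pi / (2 * m)) -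
             Real.cos ((2 * (i + 1 : ℕ) - 1) * Real.pi / (2 * m)))))
        = ∏ i ∈ (Finset.range m).erase j,
            ((s - ChebAux.node m i) / (ChebAux.node m j - ChebAux.node m i)) := rfl
    rw [hrw, Finset.prod_div_distrib]
    set N : ℝ := ∏ i ∈ (Finset.range m).erase j, (s - ChebAux.node m i) with hN
    set D : ℝ := ∏ i ∈ (Finset.range m).erase j, (ChebAux.node m j - ChebAux.node m i) with hD
    have hNnonneg : 0 ≤ N := by
      refine Finset.prod_nonneg ?_
      intro i hi
      have h := ChebAux.node_lt_one hm (Finset.mem_range.mp (Finset.mem_of_mem_erase hi))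
      linarith
    have hDne : D ≠ 0 := by
      refine Finset.prod_ne_zero_iff.mpr ?_
      intro i hi
      have hi' := Finset.mem_erase.mp hi
      exact sub_ne_zero_of_ne
        (ChebAux.node_inj hm hj (Finset.mem_range.mp hi'.2) (Ne.symm hi'.1))
    have hDpos : 0 < |D| := abs_pos.mpr hDne
    rw [abs_div, abs_of_nonneg hNnonneg, div_le_div_iff₀ hDpos hm0]
    have hda := ChebAux.deriv_abs hm hj
    have hnb := ChebAux.num_bound hm hj hs
    have hsinpos := ChebAux.sin_theta_pos hm hj
    calc N * m = N * ((2:ℝ)^(m-1) * (Real.sin (ChebAux.theta m j) * |D|)) := by rw [hda]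
      _ = ((2:ℝ)^(m-1) * (Real.sin (ChebAux.theta m j) * N)) * |D| := by ring
      _ ≤ ((2:ℝ)^(m-1) * (2 * s^m)) * |D| := by
          refine mul_le_mul_of_nonneg_right ?_ hDpos.le
          exact mul_le_mul_of_nonneg_left hnb (by positivity)
      _ = (2*s)^m * |D| := by
          rw [mul_pow]
          congr 1
          rw [show ((2:ℝ))^(m-1) * (2 * s^m) = ((2:ℝ)^(m-1) * 2) * s^m by ring,
            ← pow_succ]
          congr 2
          omega
  refine ⟨key, ?_⟩
  refine le_trans (Finset.sum_le_card_nsmul _ _ _ key) ?_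
  rw [Finset.card_range, nsmul_eq_mul, mul_comm, div_mul_cancel₀ _ (ne_of_gt hm0)]
end
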